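/- Fix σ^B > 0 and T > 0, and for m ∈ ℝ let C(m) = ∫_m^∞ (x − m)ψ(x) dx and P(m) = ∫_{−∞}^m (m − x)ψ(x) dx, where ψ is the centered Gaussian density with variance (σ^B)²T. Then: (i) C(−m) = P(m) for all m; (ii) C is strictly decreasing from ℝ onto ℝ_{>0} and P strictly increasing from ℝ onto ℝ_{>0}; (iii) there exists a strictly decreasing self-inverse function I: ℝ_{>0} → ℝ_{>0} (i.e. I ∘ I = id) such that P(m) = I(C(m)) for all m ∈ ℝ. -/

import Mathlib

/-!
Let `μ` be the centred Gaussian law with density `ψ`, so that `C(m) = ∫ (x - m)⁺ dμ`.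
Since `ψ` is even, the substitution `x ↦ -x` gives `P(m) = C(-m)`.
For any finite measure `μ` on `ℝ` with a first moment that charges every half-line `(t, ∞)`,
`C` is Lipschitz, strictly decreasing, tends to `0` at `+∞` by dominated convergence and
to `+∞` at `-∞` because `C(m) ≥ ∫ x dμ - m μ(ℝ)`; by the intermediate value theorem its
range is `(0, ∞)`.
The involution is then `I = C ∘ (-·) ∘ C⁻¹`, for which `I (C m) = C (-m) = P m`.
-/

open MeasureTheory

/-- The density of `S_T − S₀` in the Bachelier model: the centered Gaussian density
with variance `σ²T`. -/
noncomputable def bachelierPsi (σ T x : ℝ) : ℝ :=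
  (σ * Real.sqrt (2 * Real.pi * T))⁻¹ * Real.exp (-x ^ 2 / (2 * σ ^ 2 * T))

/-- Bachelier call price as a function of `m = K − S₀`. -/
noncomputable def bachelierCall (σ T m : ℝ) : ℝ :=
  ∫ x in Set.Ioi m, (x - m) * bachelierPsi σ T x

/-- Bachelier put price as a function of `m = K − S₀`. -/
noncomputable def bachelierPut (σ T m : ℝ) : ℝ :=
  ∫ x in Set.Iic m, (m - x) * bachelierPsi σ T x

open Set Filter Topology ProbabilityTheory

noncomputable def callPrice (μ : Measure ℝ) (m : ℝ) : ℝ :=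
  ∫ x, max (x - m) 0 ∂μ

section callPrice

variable {μ : Measure ℝ}

lemma callPrice_nonneg (m : ℝ) : 0 ≤ callPrice μ m :=
  integral_nonneg fun _ => le_max_right _ _

variable [IsFiniteMeasure μ]

lemma integrable_sub_const_of_integrable_id (hμ : Integrable id μ) (m : ℝ) :
    Integrable (fun x => x - m) μ :=
  hμ.sub (integrable_const m)

lemma integrable_max_sub_const (hμ : Integrable id μ) (m : ℝ) :
    Integrable (fun x => max (x - m) 0) μ :=
  (integrable_sub_const_of_integrable_id hμ m).pos_part

lemma lipschitzWith_callPrice (hμ : Integrable id μ) :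
    LipschitzWith (measureUnivNNReal μ) (callPrice μ) := by
  refine LipschitzWith.of_dist_le_mul fun m m' => ?_
  rw [Real.dist_eq, Real.dist_eq, callPrice, callPrice,
    ← integral_sub (integrable_max_sub_const hμ m) (integrable_max_sub_const hμ m'),
    ← Real.norm_eq_abs]
  refine (norm_integral_le_of_norm_le_const (ae_of_all _ fun x => ?_)).trans_eq (mul_comm _ _)
  simpa [abs_sub_comm m m'] using abs_max_sub_max_le_abs (x - m) (x - m') 0

lemma integral_id_sub_le_callPrice (hμ : Integrable id μ) (m : ℝ) :
    ∫ x, x ∂μ - m * μ.real univ ≤ callPrice μ m := by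
  have h := integral_mono (integrable_sub_const_of_integrable_id hμ m)
    (integrable_max_sub_const hμ m) fun x => le_max_left (x - m) 0
  rwa [integral_sub (f := fun x => x) hμ (integrable_const m), integral_const, smul_eq_mul,
    mul_comm] at h

lemma tendsto_callPrice_atBot (hμ : Integrable id μ) (hμ0 : μ ≠ 0) :
    Tendsto (callPrice μ) atBot atTop := by
  have hpos : 0 < μ.real univ := by
    simpa [measureReal_def] using ENNReal.toReal_pos (Measure.measure_univ_ne_zero.2 hμ0)
      (measure_ne_top μ univ)
  exact tendsto_atTop_mono (fun m => by linarith [integral_id_sub_le_callPrice hμ m])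
    (tendsto_atTop_add_const_left _ (∫ x, x ∂μ) (tendsto_neg_atBot_atTop.atTop_mul_const hpos))

lemma tendsto_callPrice_atTop (hμ : Integrable id μ) : Tendsto (callPrice μ) atTop (𝓝 0) := by
  rw [← integral_zero ℝ ℝ (μ := μ)]
  refine tendsto_integral_filter_of_dominated_convergence (fun x => max x 0)
    (Eventually.of_forall fun m => (integrable_max_sub_const hμ m).aestronglyMeasurable) ?_
    (by simpa using integrable_max_sub_const hμ 0) (ae_of_all _ fun x => ?_)
  · filter_upwards [eventually_ge_atTop 0] with m hm
    refine ae_of_all _ fun x => ?_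
    rw [Real.norm_of_nonneg (le_max_right _ _)]
    exact max_le_max (by linarith) le_rfl
  · refine tendsto_const_nhds.congr' ?_
    filter_upwards [eventually_ge_atTop x] with m hm
    rw [max_eq_right (by linarith)]

lemma callPrice_strictAnti (hμ : Integrable id μ) (hμ_Ioi : ∀ t, μ (Ioi t) ≠ 0) :
    StrictAnti (callPrice μ) := by
  intro m m' hmm'
  rw [callPrice, callPrice, ← sub_pos,
    ← integral_sub (integrable_max_sub_const hμ m) (integrable_max_sub_const hμ m')]
  have hle : ∀ x, max (x - m') 0 ≤ max (x - m) 0 := fun x => max_le_max (by linarith) le_rfl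
  rw [integral_pos_iff_support_of_nonneg (fun x => sub_nonneg.2 (hle x))
    ((integrable_max_sub_const hμ m).sub (integrable_max_sub_const hμ m'))]
  refine (pos_iff_ne_zero.2 (hμ_Ioi m)).trans_le (measure_mono fun x (hx : m < x) => ?_)
  rw [Function.mem_support, sub_ne_zero, max_eq_left (sub_pos.2 hx).le]
  exact (max_lt (by linarith) (sub_pos.2 hx)).ne'

lemma callPrice_pos (hμ : Integrable id μ) (hμ_Ioi : ∀ t, μ (Ioi t) ≠ 0) (m : ℝ) :
    0 < callPrice μ m :=
  (callPrice_nonneg (m + 1)).trans_lt (callPrice_strictAnti hμ hμ_Ioi (lt_add_one m))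

lemma range_callPrice (hμ : Integrable id μ) (hμ_Ioi : ∀ t, μ (Ioi t) ≠ 0) :
    range (callPrice μ) = Ioi 0 := by
  refine (range_subset_iff.2 (callPrice_pos hμ hμ_Ioi)).antisymm fun c (hc : 0 < c) => ?_
  have hμ0 : μ ≠ 0 := fun h => hμ_Ioi 0 (by simp [h])
  obtain ⟨a, ha⟩ := ((tendsto_callPrice_atTop hμ).eventually (gt_mem_nhds hc)).exists
  obtain ⟨b, hb⟩ := ((tendsto_callPrice_atBot hμ hμ0).eventually_ge_atTop c).exists
  exact mem_range_of_exists_le_of_exists_ge (lipschitzWith_callPrice hμ).continuous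
    ⟨a, ha.le⟩ ⟨b, hb⟩

end callPrice

lemma StrictAnti.exists_involution_conj_neg {C : ℝ → ℝ} (hC : StrictAnti C) :
    ∃ I : ℝ → ℝ, StrictAntiOn I (range C) ∧ MapsTo I (range C) (range C)
      ∧ (∀ y ∈ range C, I (I y) = y) ∧ ∀ m, C (-m) = I (C m) := by
  have hI : ∀ m, C (-Function.invFun C (C m)) = C (-m) := fun m => by
    rw [Function.leftInverse_invFun hC.injective m]
  refine ⟨fun y => C (-Function.invFun C y), ?_, ?_, ?_, fun m => (hI m).symm⟩
  · rintro _ ⟨a, rfl⟩ _ ⟨b, rfl⟩ hab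
    simp only [hI]
    exact hC (neg_lt_neg (hC.lt_iff_gt.1 hab))
  · rintro _ ⟨a, rfl⟩
    exact ⟨-a, (hI a).symm⟩
  · rintro _ ⟨a, rfl⟩
    simp only [hI, neg_neg]

lemma bachelierPsi_eq_gaussianPDFReal {σ T : ℝ} (hσ : 0 ≤ σ) (hT : 0 ≤ T) :
    bachelierPsi σ T = gaussianPDFReal 0 (σ ^ 2 * T).toNNReal := by
  ext x
  have hsqrt : Real.sqrt (2 * Real.pi * (σ ^ 2 * T)) = σ * Real.sqrt (2 * Real.pi * T) := by
    rw [show 2 * Real.pi * (σ ^ 2 * T) = σ ^ 2 * (2 * Real.pi * T) by ring,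
      Real.sqrt_mul (sq_nonneg σ), Real.sqrt_sq hσ]
  rw [bachelierPsi, gaussianPDFReal, Real.coe_toNNReal _ (by positivity), hsqrt, sub_zero,
    ← mul_assoc 2 (σ ^ 2) T]

lemma bachelierCall_eq_callPrice {σ T : ℝ} (hσ : 0 < σ) (hT : 0 < T) :
    bachelierCall σ T = callPrice (gaussianReal 0 (σ ^ 2 * T).toNNReal) := by
  ext m
  have hv : (σ ^ 2 * T).toNNReal ≠ 0 := (Real.toNNReal_pos.2 (by positivity)).ne'
  rw [callPrice, integral_gaussianReal_eq_integral_smul hv, bachelierCall,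
    ← integral_indicator measurableSet_Ioi, bachelierPsi_eq_gaussianPDFReal hσ.le hT.le]
  refine integral_congr_ae (ae_of_all _ fun x => ?_)
  by_cases hx : m < x
  · simp [indicator_of_mem (show x ∈ Ioi m from hx), max_eq_left (sub_pos.2 hx).le, mul_comm]
  · simp [indicator_of_notMem (show x ∉ Ioi m from hx),
      max_eq_right (sub_nonpos.2 (not_lt.1 hx))]

lemma bachelierPut_eq_bachelierCall_neg (σ T m : ℝ) :
    bachelierPut σ T m = bachelierCall σ T (-m) := by
  rw [bachelierCall, bachelierPut,
    ← integral_comp_neg_Iic m (fun x => (x - -m) * bachelierPsi σ T x)]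
  refine setIntegral_congr_fun measurableSet_Iic fun x _ => ?_
  simp only [bachelierPsi, even_two, Even.neg_pow]
  ring

lemma gaussianReal_Ioi_ne_zero {v : NNReal} (hv : v ≠ 0) (μ t : ℝ) :
    gaussianReal μ v (Ioi t) ≠ 0 :=
  fun h => by simpa using gaussianReal_absolutelyContinuous' μ hv h

lemma integrable_id_gaussianReal (μ : ℝ) (v : NNReal) : Integrable id (gaussianReal μ v) :=
  memLp_one_iff_integrable.1 (memLp_id_gaussianReal' 1 ENNReal.one_ne_top)

/-- Bachelier's theorem of reciprocity: (i) `C(−m) = P(m)`;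
(ii) `C` is strictly decreasing onto `ℝ_{>0}` and `P` strictly increasing onto `ℝ_{>0}`;
(iii) there is a strictly decreasing self-inverse map `I : ℝ_{>0} → ℝ_{>0}` with
`P(m) = I(C(m))` for all `m`. -/
theorem bachelier_reciprocity (σ T : ℝ) (hσ : 0 < σ) (hT : 0 < T) :
    (∀ m : ℝ, bachelierCall σ T (-m) = bachelierPut σ T m)
      ∧ StrictAnti (bachelierCall σ T)
      ∧ Set.range (bachelierCall σ T) = Set.Ioi 0
      ∧ StrictMono (bachelierPut σ T)
      ∧ Set.range (bachelierPut σ T) = Set.Ioi 0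
      ∧ ∃ I : ℝ → ℝ, StrictAntiOn I (Set.Ioi 0)
          ∧ Set.MapsTo I (Set.Ioi 0) (Set.Ioi 0)
          ∧ (∀ y ∈ Set.Ioi (0 : ℝ), I (I y) = y)
          ∧ ∀ m : ℝ, bachelierPut σ T m = I (bachelierCall σ T m) := by
  have hput : bachelierPut σ T = bachelierCall σ T ∘ Neg.neg :=
    funext (bachelierPut_eq_bachelierCall_neg σ T)
  have hv : (σ ^ 2 * T).toNNReal ≠ 0 := (Real.toNNReal_pos.2 (by positivity)).ne'
  obtain ⟨hanti, hrange⟩ :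
      StrictAnti (bachelierCall σ T) ∧ range (bachelierCall σ T) = Ioi 0 := by
    rw [bachelierCall_eq_callPrice hσ hT]
    exact ⟨callPrice_strictAnti (integrable_id_gaussianReal 0 _) (gaussianReal_Ioi_ne_zero hv 0),
      range_callPrice (integrable_id_gaussianReal 0 _) (gaussianReal_Ioi_ne_zero hv 0)⟩
  obtain ⟨I, hI_anti, hI_maps, hI_invol, hI_put⟩ := hanti.exists_involution_conj_neg
  rw [hrange] at hI_anti hI_maps hI_invol
  refine ⟨fun m => by rw [hput, Function.comp_apply], hanti, hrange, ?_, ?_,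
    I, hI_anti, hI_maps, hI_invol, fun m => by rw [hput, Function.comp_apply, hI_put]⟩
  · rw [hput]
    exact hanti.comp fun _ _ => neg_lt_neg
  · rw [hput, neg_surjective.range_comp, hrange]
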